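/- With Λ and notation as above, for any two distinct x̂, ŷ ∈ Λ and any δ ∈ (0,1], Φ*_{(σ,x̂,ŷ)}(δ) = 1. -/

import Mathlib

open Filter

noncomputable def Phi {α : Type*} (d : α → α → ℝ) (f : α → α) (x y : α) (δ : ℝ) : ℝ :=
  liminf (fun n : ℕ =>
    (((Finset.range (n+1)).filter (fun k => d (f^[k] x) (f^[k] y) < δ)).card : ℝ) / n) atTop

noncomputable def PhiStar {α : Type*} (d : α → α → ℝ) (f : α → α) (x y : α) (δ : ℝ) : ℝ :=
  limsup (fun n : ℕ =>
    (((Finset.range (n+1)).filter (fun k => d (f^[k] x) (f^[k] y) < δ)).card : ℝ) / n) atTop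

open Classical in
noncomputable def shiftDist (x y : ℕ → Bool) : ℝ :=
  if x = y then 0 else (2:ℝ)⁻¹ ^ (sInf {j | x j ≠ y j})

def shift (x : ℕ → Bool) : ℕ → Bool := fun n => x (n+1)

noncomputable def diamX (X : Type*) [MetricSpace X] : ℝ := Metric.diam (Set.univ : Set X)

/-!
Every index `i` that is a triangular number carries a block `[b (i-1), b i)` of zeros which is
the same for all points of `Λ`. On such a block two points agree, so their shifted orbits are
`δ`-close at every time of the block except the last `m` ones, where `2⁻¹ ^ m < δ`. Since the
block length `a i` dominates `b (i-1)`, the proportion of close times up to `b i` tends to `1`.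
-/

open Topology Finset

lemma shift_iterate_apply (k : ℕ) (x : ℕ → Bool) (n : ℕ) : shift^[k] x n = x (n + k) := by
  induction k generalizing x n with
  | zero => rfl
  | succ k ih =>
    rw [Function.iterate_succ_apply, ih]
    simp only [shift, Nat.add_assoc]

lemma shiftDist_lt_of_forall_lt_eq {x y : ℕ → Bool} {δ : ℝ} {m : ℕ} (hδ : 0 < δ)
    (hm : (2 : ℝ)⁻¹ ^ m < δ) (h : ∀ j < m, x j = y j) : shiftDist x y < δ := by
  unfold shiftDist
  split_ifs with hxy
  · exact hδ
  · have hne : {j | x j ≠ y j}.Nonempty := Function.ne_iff.mp hxy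
    have hm_le : m ≤ sInf {j | x j ≠ y j} := by
      by_contra! hlt
      exact Nat.sInf_mem hne (h _ hlt)
    exact (pow_le_pow_of_le_one (by norm_num) (by norm_num) hm_le).trans_lt hm

section Frequency

variable (P : ℕ → Prop) [DecidablePred P]

/-- The proportion `#{k ≤ n | P k} / n` whose `limsup` is `Φ*`. -/
noncomputable def freq (n : ℕ) : ℝ := (((range (n + 1)).filter P).card : ℝ) / n

lemma freq_nonneg (n : ℕ) : 0 ≤ freq P n := by unfold freq; positivity

lemma freq_le_one_add_inv (n : ℕ) : freq P n ≤ 1 + 1 / n := by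
  have hcard : (((range (n + 1)).filter P).card : ℝ) ≤ n + 1 := by
    exact_mod_cast (card_filter_le _ _).trans (card_range _).le
  calc freq P n ≤ (n + 1) / n := div_le_div_of_nonneg_right hcard n.cast_nonneg
    _ = n / n + 1 / n := add_div _ _ _
    _ ≤ 1 + 1 / n := by gcongr; exact div_self_le_one _

lemma isBoundedUnder_le_freq : IsBoundedUnder (· ≤ ·) atTop (freq P) :=
  isBoundedUnder_of ⟨2, fun n => (freq_le_one_add_inv P n).trans (by
    have : 1 / (n : ℝ) ≤ 1 := by
      rcases n.eq_zero_or_pos with rfl | hn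
      · simp
      · exact div_le_one_of_le₀ (by exact_mod_cast hn) n.cast_nonneg
    linarith)⟩

lemma limsup_freq_le_one : limsup (freq P) atTop ≤ 1 := by
  have hlim : Tendsto (fun n : ℕ => 1 + 1 / (n : ℝ)) atTop (𝓝 1) := by
    simpa using tendsto_one_div_atTop_nhds_zero_nat.const_add (1 : ℝ)
  calc limsup (freq P) atTop ≤ limsup (fun n : ℕ => 1 + 1 / (n : ℝ)) atTop :=
        limsup_le_limsup (Eventually.of_forall (freq_le_one_add_inv P))
          (isCoboundedUnder_le_of_le atTop (freq_nonneg P)) hlim.isBoundedUnder_le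
    _ = 1 := hlim.limsup_eq

lemma sub_sub_le_card_filter_range {s e m : ℕ} (hP : ∀ k, s ≤ k → k + m ≤ e → P k) :
    (e : ℝ) - m - s ≤ ((range (e + 1)).filter P).card := by
  have hsub : Ico s (e + 1 - m) ⊆ (range (e + 1)).filter P := fun k hk => by
    rw [mem_Ico] at hk
    exact mem_filter.mpr ⟨mem_range.mpr (by omega), hP k hk.1 (by omega)⟩
  have hcard : e ≤ (e + 1 - m - s) + m + s := by omega
  have hcard' : ((e + 1 - m - s : ℕ) : ℝ) ≤ ((range (e + 1)).filter P).card := by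
    exact_mod_cast (Nat.card_Ico s (e + 1 - m) ▸ card_le_card hsub)
  have : (e : ℝ) ≤ ((e + 1 - m - s : ℕ) : ℝ) + m + s := by exact_mod_cast hcard
  linarith

lemma one_le_limsup_freq {s e : ℕ → ℕ} (m : ℕ) (hP : ∀ t k, s t ≤ k → k + m ≤ e t → P k)
    (he : Tendsto e atTop atTop) (hse : Tendsto (fun t => (s t : ℝ) / e t) atTop (𝓝 0)) :
    1 ≤ limsup (freq P) atTop := by
  have heR : Tendsto (fun t => (e t : ℝ)) atTop atTop :=
    tendsto_natCast_atTop_atTop.comp he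
  have hlower : Tendsto (fun t => 1 - (m / (e t : ℝ) + s t / e t)) atTop (𝓝 1) := by
    simpa using ((tendsto_const_nhds.div_atTop heR).add hse).const_sub (1 : ℝ)
  have hbound : ∀ᶠ t in atTop, 1 - (m / (e t : ℝ) + s t / e t) ≤ freq P (e t) := by
    filter_upwards [heR.eventually_gt_atTop 0] with t hpos
    calc 1 - (m / (e t : ℝ) + s t / e t) = ((e t : ℝ) - m - s t) / e t := by
          field_simp; ring
      _ ≤ freq P (e t) := div_le_div_of_nonneg_right
          (sub_sub_le_card_filter_range P (hP t)) (e t).cast_nonneg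
  refine le_of_forall_lt_imp_le_of_dense fun c hc => ?_
  refine le_limsup_of_frequently_le ?_ (isBoundedUnder_le_freq P)
  exact he.frequently (((hlower.eventually_const_le hc).and hbound).mono
    fun t h => h.1.trans h.2).frequently

lemma limsup_freq_eq_one {s e : ℕ → ℕ} (m : ℕ) (hP : ∀ t k, s t ≤ k → k + m ≤ e t → P k)
    (he : Tendsto e atTop atTop) (hse : Tendsto (fun t => (s t : ℝ) / e t) atTop (𝓝 0)) :
    limsup (freq P) atTop = 1 :=
  le_antisymm (limsup_freq_le_one P) (one_le_limsup_freq P m hP he hse)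

end Frequency

/-- `padIndex t + 1 = (t + 1) (t + 2) / 2` is a triangular number, the index of a padding block. -/
def padIndex (t : ℕ) : ℕ := (t + 1) * (t + 2) / 2 - 1

lemma succ_le_triangle (t : ℕ) : t + 1 ≤ (t + 1) * (t + 2) / 2 :=
  (Nat.le_div_iff_mul_le two_pos).mpr (Nat.mul_le_mul_left _ (by omega))

lemma le_padIndex (t : ℕ) : t ≤ padIndex t := by
  have := succ_le_triangle t
  unfold padIndex
  omega

lemma tendsto_padIndex : Tendsto padIndex atTop atTop :=
  tendsto_atTop_mono le_padIndex tendsto_id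

section Blocks

variable {a b : ℕ → ℕ} (hb : ∀ n, b n = ∑ i ∈ Icc 1 n, a i)
include hb

lemma partialSums_succ (n : ℕ) : b (n + 1) = b n + a (n + 1) := by
  rw [hb, hb, sum_Icc_succ_top (by omega)]

lemma self_le_partialSums (hpos : ∀ i, 1 ≤ i → 0 < a i) (n : ℕ) : n ≤ b n := by
  rw [hb]
  simpa using card_nsmul_le_sum (Icc 1 n) a 1 fun i hi => hpos i (mem_Icc.mp hi).1

lemma tendsto_partialSums_div_succ (hpos : ∀ i, 1 ≤ i → 0 < a i)
    (hab : Tendsto (fun n : ℕ => ((b n + n : ℕ) : ℝ) / (a (n + 1) : ℝ)) atTop (𝓝 0))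
    {ι : ℕ → ℕ} (hι : Tendsto ι atTop atTop) :
    Tendsto (fun t => (b (ι t) : ℝ) / b (ι t + 1)) atTop (𝓝 0) := by
  refine squeeze_zero (fun t => by positivity) (fun t => ?_) (hab.comp hι)
  have ha : (0 : ℝ) < a (ι t + 1) := by exact_mod_cast hpos _ (by omega)
  rw [Function.comp_apply, partialSums_succ hb]
  push_cast
  gcongr <;> linarith

end Blocks

lemma eq_false_of_mem_padding {b : ℕ → ℕ} {N : (ℕ → Bool) → ℕ → Bool}
    (hN : ∀ z : ℕ → Bool, ∀ i : ℕ, 1 ≤ i → ∀ p : ℕ, b (i-1) ≤ p → p < b i →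
      N z p = if (∃ t ∈ Finset.Icc 1 i, t*(t+1)/2 = i) then false
        else z (i - ((Finset.Icc 1 i).filter (fun t => t*(t+1)/2 ≤ i)).card - 1))
    (z : ℕ → Bool) {t p : ℕ} (hp₁ : b (padIndex t) ≤ p) (hp₂ : p < b (padIndex t + 1)) :
    N z p = false := by
  have ht : t + 1 ≤ padIndex t + 1 := by have := le_padIndex t; omega
  have htri : (t + 1) * (t + 1 + 1) / 2 = padIndex t + 1 := by
    have := succ_le_triangle t
    rw [show t + 1 + 1 = t + 2 from rfl]
    unfold padIndex
    omega
  rw [hN z (padIndex t + 1) (by omega) p (by simpa using hp₁) hp₂,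
    if_pos ⟨t + 1, mem_Icc.mpr ⟨by omega, ht⟩, htri⟩]

theorem stmt16_general (a : ℕ → ℕ) (hpos : ∀ i, 1 ≤ i → 0 < a i)
    (b : ℕ → ℕ) (hb : ∀ n, b n = ∑ i ∈ Finset.Icc 1 n, a i)
    (hab : Filter.Tendsto (fun n : ℕ => ((b n + n : ℕ) : ℝ) / (a (n+1) : ℝ)) atTop (nhds 0))
    (L : (ℕ → Bool) → (ℕ → Bool))
    (N : (ℕ → Bool) → (ℕ → Bool))
    (hN : ∀ z : ℕ → Bool, ∀ i : ℕ, 1 ≤ i → ∀ p : ℕ, b (i-1) ≤ p → p < b i →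
      N z p = if (∃ t ∈ Finset.Icc 1 i, t*(t+1)/2 = i) then false
        else z (i - ((Finset.Icc 1 i).filter (fun t => t*(t+1)/2 ≤ i)).card - 1)) :
    ∀ xh ∈ Set.range (fun x => N (L x)), ∀ yh ∈ Set.range (fun x => N (L x)), xh ≠ yh →
      ∀ δ : ℝ, 0 < δ → δ ≤ 1 → PhiStar shiftDist shift xh yh δ = 1 := by
  rintro _ ⟨x, rfl⟩ _ ⟨y, rfl⟩ - δ hδ -
  obtain ⟨m, hm⟩ := exists_pow_lt_of_lt_one hδ (by norm_num : (2 : ℝ)⁻¹ < 1)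
  have hclose : ∀ t k, b (padIndex t) ≤ k → k + m ≤ b (padIndex t + 1) →
      shiftDist (shift^[k] (N (L x))) (shift^[k] (N (L y))) < δ := fun t k hk hkm =>
    shiftDist_lt_of_forall_lt_eq hδ hm fun j hj => by
      rw [shift_iterate_apply, shift_iterate_apply,
        eq_false_of_mem_padding hN (t := t) _ (by omega) (by omega),
        eq_false_of_mem_padding hN (t := t) _ (by omega) (by omega)]
  have hend : Tendsto (fun t => b (padIndex t + 1)) atTop atTop :=
    tendsto_atTop_mono (fun t => ((le_padIndex t).trans (Nat.le_succ _)).trans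
      (self_le_partialSums hb hpos _)) tendsto_id
  exact limsup_freq_eq_one _ m hclose hend
    (tendsto_partialSums_div_succ hb hpos hab tendsto_padIndex)

theorem stmt16 (a : ℕ → ℕ) (hpos : ∀ i, 1 ≤ i → 0 < a i)
    (hmono : ∀ i j, 1 ≤ i → i < j → a i < a j)
    (b : ℕ → ℕ) (hb : ∀ n, b n = ∑ i ∈ Finset.Icc 1 n, a i)
    (hab : Filter.Tendsto (fun n : ℕ => ((b n + n : ℕ) : ℝ) / (a (n+1) : ℝ)) atTop (nhds 0))
    (L : (ℕ → Bool) → (ℕ → Bool))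
    (hL : ∀ x : ℕ → Bool, ∀ n : ℕ, 1 ≤ n → ∀ j, j < n → L x (n*(n-1)/2 + j) = x j)
    (N : (ℕ → Bool) → (ℕ → Bool))
    (hN : ∀ z : ℕ → Bool, ∀ i : ℕ, 1 ≤ i → ∀ p : ℕ, b (i-1) ≤ p → p < b i →
      N z p = if (∃ t ∈ Finset.Icc 1 i, t*(t+1)/2 = i) then false
        else z (i - ((Finset.Icc 1 i).filter (fun t => t*(t+1)/2 ≤ i)).card - 1)) :
    ∀ xh ∈ Set.range (fun x => N (L x)), ∀ yh ∈ Set.range (fun x => N (L x)), xh ≠ yh →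
      ∀ δ : ℝ, 0 < δ → δ ≤ 1 → PhiStar shiftDist shift xh yh δ = 1 :=
  stmt16_general a hpos b hb hab L N hN
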